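/- arXiv:1310.6644 — 2 statements merged into one kernel-verified Lean document; each statement's English description precedes it below -/
import Mathlib

section
/- If a dimaze (D, B_0) contains no alternating comb, then a set of vertices B is a maximal linkable set if and only if B is linkable onto B_0. -/
open Set

universe u

variable {V : Type*}

/-- A directed path in the digraph `D`: a nonempty duplicate-free list of vertices
with an edge between consecutive vertices. -/
structure DiPath {V : Type*} (D : V → V → Prop) where
  verts : List V
  ne : verts ≠ []
  nodup : verts.Nodup
  chain : verts.Chain' D

namespace DiPath

variable {D : V → V → Prop}

/-- The initial vertex of a directed path. -/
def first (p : DiPath D) : V := p.verts.head p.ne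

/-- The terminal vertex of a directed path. -/
def last (p : DiPath D) : V := p.verts.getLast p.ne

/-- The set of vertices of a directed path. -/
def vertSet (p : DiPath D) : Set V := {v | v ∈ p.verts}

/-- The set of (directed) edges of a directed path. -/
def edgeSet (p : DiPath D) : Set (V × V) := {e | e ∈ p.verts.zip p.verts.tail}

end DiPath

/-- The set of initial vertices of a collection of paths. -/
def Ini {D : V → V → Prop} (P : Set (DiPath D)) : Set V := {v | ∃ p ∈ P, p.first = v}

/-- The set of terminal vertices of a collection of paths. -/
def Ter {D : V → V → Prop} (P : Set (DiPath D)) : Set V := {v | ∃ p ∈ P, p.last = v}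

/-- All vertices used by a collection of paths. -/
def LinkVerts {D : V → V → Prop} (P : Set (DiPath D)) : Set V := ⋃ p ∈ P, p.vertSet

/-- All edges used by a collection of paths. -/
def LinkEdges {D : V → V → Prop} (P : Set (DiPath D)) : Set (V × V) := ⋃ p ∈ P, p.edgeSet

/-- A linkage in the dimaze `(D, B0)`: a set of pairwise vertex-disjoint directed
paths, each ending in `B0`. -/
def IsLinkage (D : V → V → Prop) (B0 : Set V) (P : Set (DiPath D)) : Prop :=
  (∀ p ∈ P, p.last ∈ B0) ∧
  (∀ p ∈ P, ∀ q ∈ P, p ≠ q → Disjoint p.vertSet q.vertSet)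

/-- `(D, B0)` is a dimaze: every vertex of `B0` has out-degree `0`. -/
def IsDimaze (D : V → V → Prop) (B0 : Set V) : Prop := ∀ b ∈ B0, ∀ v, ¬ D b v

/-- A set of vertices is linkable if it is the set of initial vertices of a linkage. -/
def Linkable (D : V → V → Prop) (B0 : Set V) (I : Set V) : Prop :=
  ∃ P, IsLinkage D B0 P ∧ Ini P = I

/-- A set of vertices is linkable onto `B0` if it is the set of initial vertices of
a linkage whose terminal vertices are all of `B0`. -/
def LinkableOnto (D : V → V → Prop) (B0 : Set V) (I : Set V) : Prop :=
  ∃ P, IsLinkage D B0 P ∧ Ini P = I ∧ Ter P = B0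

/-- `I` is a maximal element (w.r.t. inclusion) of the set system `Ind`. -/
def MaximalIn {α : Type*} (Ind : Set α → Prop) (I : Set α) : Prop :=
  Ind I ∧ ∀ J, Ind J → I ⊆ J → J = I

/-- The maximality axiom (IM). -/
def SatisfiesIM {α : Type*} (Ind : Set α → Prop) : Prop :=
  ∀ I X : Set α, Ind I → I ⊆ X →
    ∃ J, Ind J ∧ I ⊆ J ∧ J ⊆ X ∧ ∀ K, Ind K → K ⊆ X → J ⊆ K → K = J

/-- `Ind` is the collection of independent sets of a matroid:
axioms (I1), (I2), (I3) and (IM). -/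
def IsMatroidIndep {α : Type*} (Ind : Set α → Prop) : Prop :=
  Ind ∅ ∧
  (∀ I J : Set α, I ⊆ J → Ind J → Ind I) ∧
  (∀ I B : Set α, Ind I → ¬ MaximalIn Ind I → MaximalIn Ind B →
    ∃ x ∈ B \ I, Ind (insert x I)) ∧
  SatisfiesIM Ind

/-- The dimaze `(D, B0)` contains an alternating comb: there is an alternating ray
(given by the injective vertex sequence `f` and edge orientations `o`, with
infinitely many vertices of in-degree 2) together with a linkage of all its
in-degree-2 vertices and its first vertex onto a set of exits contained in `B0`,
by disjoint paths meeting the ray exactly at their initial vertices. -/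
def ContainsAltComb (D : V → V → Prop) (B0 : Set V) : Prop :=
  ∃ (f : ℕ → V) (o : ℕ → Bool) (P : Set (DiPath D)),
    Function.Injective f ∧
    (∀ n, if o n then D (f n) (f (n+1)) else D (f (n+1)) (f n)) ∧
    (∀ N, ∃ k ≥ N, o k = true ∧ o (k+1) = false) ∧
    IsLinkage D B0 P ∧
    Ini P = insert (f 0) {v | ∃ k, o k = true ∧ o (k+1) = false ∧ v = f (k+1)} ∧
    (∀ p ∈ P, ∀ v ∈ p.vertSet, v ∈ Set.range f → v = p.first)

/-!
Maximal linkable sets are linkable onto `B0` in any dimaze: the exits a linkage misses can be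
added as trivial paths.

Conversely, let `P` link `B` onto `B0` and let `Q` link a set containing `B` and a further
vertex `v0`. Following a `Q`-path forwards to its exit, then the `P`-path ending there backwards
to its start (which lies in `B`, so it starts another `Q`-path), and so on, gives a ladder of
paths `q n`, `p n`. Walk it greedily: forwards along `q k`, dropping back onto a `p m` with
`m ≥ k` at the first vertex beyond which `p m` meets no later `q j`; backwards along `p m`,
jumping onto a later `q j` as soon as one is met. A lexicographic rank (index of the current
path, then progress along it) strictly increases, two visits of one vertex would have the same
successor, and the walk cannot stay on one path forever, so it is an alternating ray. The rest
of each `p m` from the vertex where the walk drops onto it avoids the ray elsewhere, so these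
paths, together with the trivial path at the starting exit, complete it to an alternating comb.
-/

lemma List.getD_mem {α : Type*} {l : List α} {i : ℕ} (h : i < l.length) (d : α) :
    l.getD i d ∈ l := by
  rw [l.getD_eq_getElem d h]
  exact List.getElem_mem h

lemma List.idxOf_getD {α : Type*} [DecidableEq α] {l : List α} (hl : l.Nodup) {i : ℕ}
    (h : i < l.length) (d : α) : l.idxOf (l.getD i d) = i := by
  rw [l.getD_eq_getElem d h]
  exact hl.idxOf_getElem i h

lemma List.getD_idxOf {α : Type*} [DecidableEq α] {l : List α} {v : α} (h : v ∈ l) (d : α) :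
    l.getD (l.idxOf v) d = v := by
  rw [l.getD_eq_getElem d (List.idxOf_lt_length_iff.2 h)]
  exact List.getElem_idxOf _

namespace DiPath

variable {D : V → V → Prop}

lemma first_mem (r : DiPath D) : r.first ∈ r.verts := List.head_mem r.ne

lemma last_mem (r : DiPath D) : r.last ∈ r.verts := List.getLast_mem r.ne

lemma length_pos (r : DiPath D) : 0 < r.verts.length := List.length_pos_iff.2 r.ne

lemma adj_getD (r : DiPath D) {i : ℕ} (h : i + 1 < r.verts.length) (d d' : V) :
    D (r.verts.getD i d) (r.verts.getD (i + 1) d') := by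
  rw [r.verts.getD_eq_getElem d (by omega), r.verts.getD_eq_getElem d' h]
  exact List.isChain_iff_getElem.1 r.chain i h

def single (D : V → V → Prop) (b : V) : DiPath D :=
  ⟨[b], List.cons_ne_nil b [], List.nodup_singleton b, List.isChain_singleton b⟩

@[simp] lemma single_verts (b : V) : (single D b).verts = [b] := rfl
@[simp] lemma single_first (b : V) : (single D b).first = b := rfl
@[simp] lemma single_last (b : V) : (single D b).last = b := rfl

lemma last_eq_of_mem_of_isDimaze {B0 : Set V} (hD : IsDimaze D B0) (r : DiPath D) {b : V}
    (hb : b ∈ B0) (hbr : b ∈ r.verts) : r.last = b := by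
  obtain ⟨i, hi, rfl⟩ := List.getElem_of_mem hbr
  by_cases hlast : i + 1 < r.verts.length
  · exact absurd (List.isChain_iff_getElem.1 r.chain i hlast) (hD _ hb _)
  · rw [last, List.getLast_eq_getElem]
    congr 1
    omega

variable [DecidableEq V]

lemma idxOf_first (r : DiPath D) : r.verts.idxOf r.first = 0 := by
  rw [first, List.head_eq_getElem]
  exact r.nodup.idxOf_getElem 0 _

lemma idxOf_last (r : DiPath D) : r.verts.idxOf r.last = r.verts.length - 1 := by
  rw [last, List.getLast_eq_getElem]
  exact r.nodup.idxOf_getElem _ _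

lemma adj_pred (r : DiPath D) {v : V} (hv : v ∈ r.verts) (h : 0 < r.verts.idxOf v) (d : V) :
    D (r.verts.getD (r.verts.idxOf v - 1) d) v := by
  have := r.adj_getD (i := r.verts.idxOf v - 1)
    (by have := List.idxOf_lt_length_iff.2 hv; omega) d d
  rwa [Nat.sub_add_cancel h, List.getD_idxOf hv] at this

lemma adj_succ (r : DiPath D) {v : V} (hv : v ∈ r.verts)
    (h : r.verts.idxOf v + 1 < r.verts.length) (d : V) :
    D v (r.verts.getD (r.verts.idxOf v + 1) d) := by
  have := r.adj_getD h d d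
  rwa [List.getD_idxOf hv] at this

def suffix (r : DiPath D) {v : V} (hv : v ∈ r.verts) : DiPath D where
  verts := r.verts.drop (r.verts.idxOf v)
  ne := by simpa using List.idxOf_lt_length_iff.2 hv
  nodup := (List.drop_sublist _ _).nodup r.nodup
  chain := r.chain.drop _

variable (r : DiPath D) {v : V} (hv : v ∈ r.verts)

lemma suffix_first : (r.suffix hv).first = v := by
  simp only [first, suffix, List.head_drop, List.getElem_idxOf]

lemma suffix_last : (r.suffix hv).last = r.last := List.getLast_drop _

include hv in
lemma mem_of_mem_suffix {w : V} (hw : w ∈ (r.suffix hv).verts) : w ∈ r.verts :=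
  (List.drop_sublist _ _).subset hw

include hv in
lemma idxOf_le_of_mem_suffix {w : V} (hw : w ∈ (r.suffix hv).verts) :
    r.verts.idxOf v ≤ r.verts.idxOf w := by
  obtain ⟨i, hi, rfl⟩ := List.getElem_of_mem hw
  simp only [suffix, List.getElem_drop]
  rw [r.nodup.idxOf_getElem]
  omega

end DiPath

section Linkage

variable {D : V → V → Prop} {B0 : Set V}

lemma Ini_eq_image (P : Set (DiPath D)) : Ini P = DiPath.first '' P := rfl

lemma Ter_eq_image (P : Set (DiPath D)) : Ter P = DiPath.last '' P := rfl

lemma IsLinkage.eq_of_mem {P : Set (DiPath D)} (hP : IsLinkage D B0 P) {r s : DiPath D}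
    (hr : r ∈ P) (hs : s ∈ P) {v : V} (hvr : v ∈ r.verts) (hvs : v ∈ s.verts) : r = s := by
  by_contra hne
  exact Set.disjoint_left.1 (hP.2 r hr s hs hne) hvr hvs

lemma IsLinkage.Ter_subset {P : Set (DiPath D)} (hP : IsLinkage D B0 P) : Ter P ⊆ B0 := by
  rintro _ ⟨r, hr, rfl⟩
  exact hP.1 r hr

lemma IsLinkage.union_single (hD : IsDimaze D B0) {P : Set (DiPath D)}
    (hP : IsLinkage D B0 P) :
    IsLinkage D B0 (P ∪ DiPath.single D '' (B0 \ Ter P)) := by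
  have hmiss : ∀ b ∈ B0 \ Ter P, ∀ r ∈ P, b ∉ r.verts := fun b hb r hr hbr =>
    hb.2 ⟨r, hr, r.last_eq_of_mem_of_isDimaze hD hb.1 hbr⟩
  refine ⟨?_, ?_⟩
  · rintro r (hr | ⟨b, hb, rfl⟩)
    exacts [hP.1 r hr, hb.1]
  · rintro r (hr | ⟨b, hb, rfl⟩) s (hs | ⟨c, hc, rfl⟩) hne <;>
      simp only [Set.disjoint_left, DiPath.vertSet, Set.mem_ofPred_eq, DiPath.single_verts,
        List.mem_singleton]
    · exact Set.disjoint_left.1 (hP.2 r hr s hs hne)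
    · rintro v hv rfl
      exact hmiss v hc r hr hv
    · rintro v rfl hv
      exact hmiss v hb s hs hv
    · rintro v rfl rfl
      exact hne rfl

theorem MaximalIn.linkableOnto (hD : IsDimaze D B0) {B : Set V}
    (h : MaximalIn (Linkable D B0) B) : LinkableOnto D B0 B := by
  obtain ⟨⟨P, hP, rfl⟩, hmax⟩ := h
  have hlink := hP.union_single hD
  have hIni : Ini (P ∪ DiPath.single D '' (B0 \ Ter P)) = Ini P ∪ (B0 \ Ter P) := by
    simp only [Ini_eq_image, Set.image_union, Set.image_image, DiPath.single_first,
      Set.image_id']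
  refine ⟨_, hlink, ?_, ?_⟩
  · rw [hIni]
    exact hmax _ ⟨_, hlink, hIni⟩ Set.subset_union_left
  · simp only [Ter_eq_image, Set.image_union, Set.image_image, DiPath.single_last,
      Set.image_id']
    exact Set.union_sdiff_cancel hP.Ter_subset

end Linkage

lemma exists_true_and_succ_false_ge {f : ℕ → Bool} (ht : ∀ n, ∃ m ≥ n, f m = true)
    (hf : ∀ n, ∃ m ≥ n, f m = false) (N : ℕ) :
    ∃ k ≥ N, f k = true ∧ f (k + 1) = false := by
  have key : ∀ d a, f a = true → f (a + d) = false →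
      ∃ k ≥ a, f k = true ∧ f (k + 1) = false := by
    intro d
    induction d with
    | zero => intro a ha ha'; simp_all
    | succ d ih =>
      intro a ha had
      cases hnext : f (a + 1)
      · exact ⟨a, le_rfl, ha, hnext⟩
      · obtain ⟨k, hk, hfk⟩ := ih (a + 1) hnext (by rwa [Nat.add_right_comm, add_assoc])
        exact ⟨k, by omega, hfk⟩
  obtain ⟨a, haN, ha⟩ := ht N
  obtain ⟨b, hba, hb⟩ := hf a
  obtain ⟨k, hk, hfk⟩ := key (b - a) a ha (by rwa [Nat.add_sub_cancel' hba])
  exact ⟨k, by omega, hfk⟩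

lemma Set.InjOn.injective_iterate {α : Type*} {g : α → α} {s : Set α}
    (hmaps : Set.MapsTo g s s) (hinj : Set.InjOn g s) {x : α} (hx : x ∈ s) (hx' : x ∉ g '' s) :
    Function.Injective fun n => g^[n] x := by
  intro a
  induction a with
  | zero =>
    rintro (_ | c) h
    · rfl
    · simp only [Function.iterate_zero, id_eq, Function.iterate_succ_apply'] at h
      exact absurd ⟨_, hmaps.iterate c hx, h.symm⟩ hx'
  | succ a ih =>
    rintro (_ | c) h <;>
      simp only [Function.iterate_zero, id_eq, Function.iterate_succ_apply'] at h
    · exact absurd ⟨_, hmaps.iterate a hx, h⟩ hx'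
    · rw [ih (hinj (hmaps.iterate a hx) (hmaps.iterate c hx) h)]

namespace Ladder

/-- A position of the walk: the `i`-th vertex of `q k`, walked forwards, or the `i`-th vertex
of `p m`, walked backwards. -/
inductive Pos
  | fwd (k i : ℕ)
  | bwd (m i : ℕ)

def Pos.isFwd : Pos → Bool
  | .fwd _ _ => true
  | .bwd _ _ => false

lemma Pos.isFwd_eq_true_iff {s : Pos} : s.isFwd = true ↔ ∃ k i, s = .fwd k i := by
  cases s <;> simp [Pos.isFwd]

lemma Pos.isFwd_eq_false_iff {s : Pos} : s.isFwd = false ↔ ∃ m i, s = .bwd m i := by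
  cases s <;> simp [Pos.isFwd]

variable {D : V → V → Prop}

structure IsLadder (B0 : Set V) (q p : ℕ → DiPath D) : Prop where
  last_eq : ∀ n, (p n).last = (q n).last
  first_mem : ∀ n, (p n).first ∈ (q (n + 1)).verts
  disjoint_q : Pairwise fun i j => Disjoint (q i).vertSet (q j).vertSet
  disjoint_p : Pairwise fun i j => Disjoint (p i).vertSet (p j).vertSet
  last_mem : ∀ n, (q n).last ∈ B0

variable (q p : ℕ → DiPath D)

def vert : Pos → V
  | .fwd k i => (q k).verts.getD i (q k).first
  | .bwd m i => (p m).verts.getD i (p m).first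

def JumpsAt (m : ℕ) (v : V) : Prop := ∃ j, m < j ∧ v ∈ (q j).verts

variable {q p}

lemma vert_bwd_zero (m : ℕ) : vert q p (.bwd m 0) = (p m).first := by
  rw [vert, List.getD_eq_getElem _ _ (p m).length_pos, DiPath.first, List.head_eq_getElem]

lemma vert_fwd_last (k : ℕ) : vert q p (.fwd k ((q k).verts.length - 1)) = (q k).last := by
  rw [vert, List.getD_eq_getElem _ _ (by have := (q k).length_pos; omega), DiPath.last,
    List.getLast_eq_getElem]

lemma vert_bwd_last (m : ℕ) : vert q p (.bwd m ((p m).verts.length - 1)) = (p m).last := by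
  rw [vert, List.getD_eq_getElem _ _ (by have := (p m).length_pos; omega), DiPath.last,
    List.getLast_eq_getElem]

namespace IsLadder

variable {B0 : Set V} (H : IsLadder B0 q p)
include H

lemma eq_of_mem_q {v : V} {i j : ℕ} (hi : v ∈ (q i).verts) (hj : v ∈ (q j).verts) :
    i = j := by
  by_contra hne
  exact Set.disjoint_left.1 (H.disjoint_q hne) hi hj

lemma eq_of_mem_p {v : V} {i j : ℕ} (hi : v ∈ (p i).verts) (hj : v ∈ (p j).verts) :
    i = j := by
  by_contra hne
  exact Set.disjoint_left.1 (H.disjoint_p hne) hi hj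

lemma pos_of_not_jumpsAt {m i : ℕ} (h : ¬ JumpsAt q m (vert q p (.bwd m i))) : 0 < i := by
  refine Nat.pos_of_ne_zero fun hi => h ⟨m + 1, by omega, ?_⟩
  rw [hi, vert_bwd_zero]
  exact H.first_mem m

end IsLadder

theorem exists_isLadder {B0 : Set V} {P Q : Set (DiPath D)} (hP : IsLinkage D B0 P)
    (hTer : Ter P = B0) (hQ : IsLinkage D B0 Q) (hsub : Ini P ⊆ Ini Q) {v0 : V}
    (hv0 : v0 ∈ Ini Q \ Ini P) : ∃ q p : ℕ → DiPath D, IsLadder B0 q p := by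
  have : Nonempty (DiPath D) := ⟨DiPath.single D v0⟩
  have hIniQ : ∀ w ∈ Ini Q, ∃ r ∈ Q, r.first = w := fun _ hw => hw
  have hTerP : ∀ b ∈ Ter P, ∃ r ∈ P, r.last = b := fun _ hb => hb
  choose! fQ hfQ using hIniQ
  choose! fP hfP using hTerP
  have hexit : ∀ w ∈ Ini Q, (fQ w).last ∈ Ter P := fun w hw => hTer ▸ hQ.1 _ (hfQ w hw).1
  set g : V → V := fun w => (fP (fQ w).last).first
  have hgP : Set.MapsTo g (Ini Q) (Ini P) := fun w hw => ⟨_, (hfP _ (hexit w hw)).1, rfl⟩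
  have hinj : Set.InjOn g (Ini Q) := by
    intro w hw w' hw' he
    have hmem : g w ∈ (fP (fQ w').last).verts := by rw [he]; exact DiPath.first_mem _
    have hPeq := hP.eq_of_mem (hfP _ (hexit w hw)).1 (hfP _ (hexit w' hw')).1
      (DiPath.first_mem _) hmem
    have hlast : (fQ w).last = (fQ w').last := by
      rw [← (hfP _ (hexit w hw)).2, hPeq, (hfP _ (hexit w' hw')).2]
    have hQeq := hQ.eq_of_mem (hfQ w hw).1 (hfQ w' hw').1 (DiPath.last_mem _)
      (hlast ▸ DiPath.last_mem _)
    rw [← (hfQ w hw).2, hQeq, (hfQ w' hw').2]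
  have hmaps : Set.MapsTo g (Ini Q) (Ini Q) := fun w hw => hsub (hgP hw)
  have hx : ∀ n, g^[n] v0 ∈ Ini Q := fun n => hmaps.iterate n hv0.1
  have hxinj := hinj.injective_iterate hmaps hv0.1 fun ⟨w, hw, he⟩ => hv0.2 (he ▸ hgP hw)
  refine ⟨fun n => fQ (g^[n] v0), fun n => fP (fQ (g^[n] v0)).last, ⟨fun n => ?_, fun n => ?_,
    fun i j hij => ?_, fun i j hij => ?_, fun n => hQ.1 _ (hfQ _ (hx n)).1⟩⟩
  · exact (hfP _ (hexit _ (hx n))).2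
  · have : (fP (fQ (g^[n] v0)).last).first = (fQ (g^[n + 1] v0)).first := by
      rw [(hfQ _ (hx (n + 1))).2, Function.iterate_succ_apply']
    exact this ▸ DiPath.first_mem _
  · refine hQ.2 _ (hfQ _ (hx i)).1 _ (hfQ _ (hx j)).1 fun he => hij (hxinj ?_)
    show g^[i] v0 = g^[j] v0
    rw [← (hfQ _ (hx i)).2, he, (hfQ _ (hx j)).2]
  · refine hP.2 _ (hfP _ (hexit _ (hx i))).1 _ (hfP _ (hexit _ (hx j))).1 fun he => hij ?_
    have := hxinj (a₁ := i + 1) (a₂ := j + 1) (by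
      simp only [Function.iterate_succ_apply']
      exact congrArg DiPath.first he)
    omega

variable (q p) [DecidableEq V]

def CleanAbove (m i : ℕ) : Prop :=
  ∀ w ∈ (p m).verts, i < (p m).verts.idxOf w → ∀ j, m < j → w ∉ (q j).verts

def DescendsAt (k : ℕ) (v : V) : Prop :=
  ∃ m, k ≤ m ∧ v ∈ (p m).verts ∧ CleanAbove q p m ((p m).verts.idxOf v)

open Classical in
noncomputable def step : Pos → Pos
  | .fwd k i =>
    if h : DescendsAt q p k (vert q p (.fwd k i)) then
      .bwd h.choose ((p h.choose).verts.idxOf (vert q p (.fwd k i)) - 1)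
    else .fwd k (i + 1)
  | .bwd m i =>
    if h : JumpsAt q m (vert q p (.bwd m i)) then
      .fwd h.choose ((q h.choose).verts.idxOf (vert q p (.bwd m i)) + 1)
    else .bwd m (i - 1)

noncomputable def walk (n : ℕ) : Pos := (step q p)^[n] (.bwd 0 ((p 0).verts.length - 1))

noncomputable def ray (n : ℕ) : V := vert q p (walk q p n)

noncomputable def orient (n : ℕ) : Bool := (walk q p (n + 1)).isFwd

def EntersAt (t m : ℕ) : Prop := ∃ k i j, walk q p t = .fwd k i ∧ walk q p (t + 1) = .bwd m j

def rank : Pos → ℕ ×ₗ ℕ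
  | .fwd k i => toLex (2 * k, i)
  | .bwd m i => toLex (2 * m + 1, (p m).verts.length - i)

def Valid : Pos → Prop
  | .fwd k i => 0 < k ∧ i < (q k).verts.length
  | .bwd m i => i < (p m).verts.length ∧ CleanAbove q p m i

variable {q p}

lemma walk_succ (n : ℕ) : walk q p (n + 1) = step q p (walk q p n) :=
  Function.iterate_succ_apply' _ _ _

lemma ray_zero : ray q p 0 = (p 0).last := vert_bwd_last 0

lemma orient_switch_iff {k : ℕ} :
    orient q p k = true ∧ orient q p (k + 1) = false ↔ ∃ m, EntersAt q p (k + 1) m := by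
  simp only [orient, EntersAt, Pos.isFwd_eq_true_iff, Pos.isFwd_eq_false_iff]
  constructor
  · rintro ⟨⟨k', i, h⟩, ⟨m, j, h'⟩⟩
    exact ⟨m, k', i, j, h, h'⟩
  · rintro ⟨m, k', i, j, h, h'⟩
    exact ⟨⟨k', i, h⟩, ⟨m, j, h'⟩⟩

lemma vert_fwd_idxOf {k : ℕ} {v : V} (hv : v ∈ (q k).verts) :
    vert q p (.fwd k ((q k).verts.idxOf v)) = v :=
  List.getD_idxOf hv _

lemma vert_bwd_idxOf {m : ℕ} {v : V} (hv : v ∈ (p m).verts) :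
    vert q p (.bwd m ((p m).verts.idxOf v)) = v :=
  List.getD_idxOf hv _

lemma step_fwd_of_not_descendsAt {k i : ℕ} (h : ¬ DescendsAt q p k (vert q p (.fwd k i))) :
    step q p (.fwd k i) = .fwd k (i + 1) := by
  simp only [step, dif_neg h]

lemma step_bwd_of_not_jumpsAt {m i : ℕ} (h : ¬ JumpsAt q m (vert q p (.bwd m i))) :
    step q p (.bwd m i) = .bwd m (i - 1) := by
  simp only [step, dif_neg h]

lemma CleanAbove.mono {m i i' : ℕ} (h : CleanAbove q p m i) (hi : i ≤ i') :
    CleanAbove q p m i' :=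
  fun w hw hlt => h w hw (by omega)

lemma CleanAbove.pred {m i : ℕ} (h : CleanAbove q p m i)
    (hv : ∀ j, m < j → vert q p (.bwd m i) ∉ (q j).verts) : CleanAbove q p m (i - 1) := by
  intro w hw hlt
  rcases Nat.lt_or_ge i ((p m).verts.idxOf w) with hgt | hle
  · exact h w hw hgt
  · have : i = (p m).verts.idxOf w := by omega
    rw [this, vert_bwd_idxOf hw] at hv
    exact hv

lemma step_fwd_eq_fwd {k i k' i' : ℕ} (h : step q p (.fwd k i) = .fwd k' i') :
    ¬ DescendsAt q p k (vert q p (.fwd k i)) ∧ k' = k ∧ i' = i + 1 := by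
  simp only [step] at h
  split_ifs at h with hd
  simp only [Pos.fwd.injEq] at h
  exact ⟨hd, h.1.symm, h.2.symm⟩

lemma step_fwd_eq_bwd {k i m j : ℕ} (h : step q p (.fwd k i) = .bwd m j) :
    k ≤ m ∧ vert q p (.fwd k i) ∈ (p m).verts ∧
      CleanAbove q p m ((p m).verts.idxOf (vert q p (.fwd k i))) ∧
      j = (p m).verts.idxOf (vert q p (.fwd k i)) - 1 := by
  simp only [step] at h
  split_ifs at h with hd
  simp only [Pos.bwd.injEq] at h
  obtain ⟨rfl, rfl⟩ := h
  exact ⟨hd.choose_spec.1, hd.choose_spec.2.1, hd.choose_spec.2.2, rfl⟩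

lemma step_bwd_eq_fwd {m i k l : ℕ} (h : step q p (.bwd m i) = .fwd k l) :
    m < k ∧ vert q p (.bwd m i) ∈ (q k).verts ∧
      l = (q k).verts.idxOf (vert q p (.bwd m i)) + 1 := by
  simp only [step] at h
  split_ifs at h with hj
  simp only [Pos.fwd.injEq] at h
  obtain ⟨rfl, rfl⟩ := h
  exact ⟨hj.choose_spec.1, hj.choose_spec.2, rfl⟩

lemma step_bwd_eq_bwd {m i m' i' : ℕ} (h : step q p (.bwd m i) = .bwd m' i') :
    ¬ JumpsAt q m (vert q p (.bwd m i)) ∧ m' = m ∧ i' = i - 1 := by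
  simp only [step] at h
  split_ifs at h with hj
  simp only [Pos.bwd.injEq] at h
  exact ⟨hj, h.1.symm, h.2.symm⟩

lemma Valid.vert_mem_q {k i : ℕ} (h : Valid q p (.fwd k i)) :
    vert q p (.fwd k i) ∈ (q k).verts :=
  List.getD_mem h.2 _

lemma Valid.idxOf_vert_q {k i : ℕ} (h : Valid q p (.fwd k i)) :
    (q k).verts.idxOf (vert q p (.fwd k i)) = i :=
  List.idxOf_getD (q k).nodup h.2 _

lemma Valid.vert_mem_p {m i : ℕ} (h : Valid q p (.bwd m i)) :
    vert q p (.bwd m i) ∈ (p m).verts :=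
  List.getD_mem h.1 _

lemma Valid.idxOf_vert_p {m i : ℕ} (h : Valid q p (.bwd m i)) :
    (p m).verts.idxOf (vert q p (.bwd m i)) = i :=
  List.idxOf_getD (p m).nodup h.1 _

namespace IsLadder

variable {B0 : Set V} (H : IsLadder B0 q p)
include H

lemma idxOf_pos {k m : ℕ} {v : V} (hkm : k ≤ m) (hvq : v ∈ (q k).verts)
    (hvp : v ∈ (p m).verts) : 0 < (p m).verts.idxOf v := by
  refine Nat.pos_of_ne_zero fun h0 => ?_
  have hv : v = (p m).first := (List.idxOf_inj hvp).1 (h0.trans (p m).idxOf_first.symm)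
  have := H.eq_of_mem_q hvq (hv ▸ H.first_mem m)
  omega

lemma step_fwd_of_descendsAt {k i m : ℕ} (hkm : k ≤ m)
    (hv : vert q p (.fwd k i) ∈ (p m).verts)
    (hc : CleanAbove q p m ((p m).verts.idxOf (vert q p (.fwd k i)))) :
    step q p (.fwd k i) = .bwd m ((p m).verts.idxOf (vert q p (.fwd k i)) - 1) := by
  have hd : DescendsAt q p k (vert q p (.fwd k i)) := ⟨m, hkm, hv, hc⟩
  have hm : hd.choose = m := H.eq_of_mem_p hd.choose_spec.2.1 hv
  simp only [step, dif_pos hd, hm]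

lemma step_bwd_of_jumpsAt {m i j : ℕ} (hmj : m < j) (hv : vert q p (.bwd m i) ∈ (q j).verts) :
    step q p (.bwd m i) = .fwd j ((q j).verts.idxOf (vert q p (.bwd m i)) + 1) := by
  have hj : JumpsAt q m (vert q p (.bwd m i)) := ⟨j, hmj, hv⟩
  have hc : hj.choose = j := H.eq_of_mem_q hj.choose_spec.2 hv
  simp only [step, dif_pos hj, hc]

lemma succ_lt_of_not_descendsAt {k i : ℕ} (hs : Valid q p (.fwd k i))
    (h : ¬ DescendsAt q p k (vert q p (.fwd k i))) : i + 1 < (q k).verts.length := by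
  by_contra hlen
  have hlast : vert q p (.fwd k i) = (p k).last := by
    rw [show i = (q k).verts.length - 1 by have := hs.2; omega, vert_fwd_last, H.last_eq]
  refine h ⟨k, le_rfl, hlast ▸ (p k).last_mem, fun w hw hlt => ?_⟩
  have := List.idxOf_lt_length_iff.2 hw
  rw [hlast, DiPath.idxOf_last] at hlt
  omega

lemma valid_step_and_rank_lt {s : Pos} (hs : Valid q p s) :
    Valid q p (step q p s) ∧ rank p s < rank p (step q p s) := by
  cases s with
  | fwd k i =>
    rcases hstep : step q p (.fwd k i) with ⟨k', i'⟩ | ⟨m, j⟩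
    · obtain ⟨hd, rfl, rfl⟩ := step_fwd_eq_fwd hstep
      exact ⟨⟨hs.1, H.succ_lt_of_not_descendsAt hs hd⟩,
        Prod.Lex.toLex_lt_toLex.2 (.inr ⟨rfl, by omega⟩)⟩
    · obtain ⟨hkm, hvp, hc, rfl⟩ := step_fwd_eq_bwd hstep
      have hpos := H.idxOf_pos hkm hs.vert_mem_q hvp
      have hlt := List.idxOf_lt_length_iff.2 hvp
      refine ⟨⟨by omega, ?_⟩, Prod.Lex.toLex_lt_toLex.2 (.inl (by omega))⟩
      refine (hc.mono (Nat.sub_add_cancel hpos).ge).pred fun j hj hvq => ?_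
      rw [Nat.sub_add_cancel hpos, vert_bwd_idxOf hvp] at hvq
      have := H.eq_of_mem_q hs.vert_mem_q hvq
      omega
  | bwd m i =>
    rcases hstep : step q p (.bwd m i) with ⟨k, l⟩ | ⟨m', i'⟩
    · obtain ⟨hmk, hvq, rfl⟩ := step_bwd_eq_fwd hstep
      refine ⟨⟨by omega, ?_⟩, Prod.Lex.toLex_lt_toLex.2 (.inl (by omega))⟩
      have hlt := List.idxOf_lt_length_iff.2 hvq
      refine lt_of_le_of_ne hlt fun he => ?_
      have hlast : vert q p (.bwd m i) = (q k).last := by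
        rw [← vert_fwd_idxOf (p := p) hvq,
          show (q k).verts.idxOf (vert q p (.bwd m i)) = (q k).verts.length - 1 by omega,
          vert_fwd_last]
      have := H.eq_of_mem_p hs.vert_mem_p (hlast ▸ (H.last_eq k) ▸ (p k).last_mem)
      omega
    · obtain ⟨hj, rfl, rfl⟩ := step_bwd_eq_bwd hstep
      have hpos := H.pos_of_not_jumpsAt hj
      have hlen := hs.1
      refine ⟨⟨by omega, hs.2.pred fun j hmj hv => hj ⟨j, hmj, hv⟩⟩,
        Prod.Lex.toLex_lt_toLex.2 (.inr ⟨rfl, by dsimp only; omega⟩)⟩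

lemma valid_walk (n : ℕ) : Valid q p (walk q p n) := by
  induction n with
  | zero => exact ⟨by have := (p 0).length_pos; omega, fun w hw hlt => by
      have := List.idxOf_lt_length_iff.2 hw; omega⟩
  | succ n ih => rw [walk_succ]; exact (H.valid_step_and_rank_lt ih).1

lemma strictMono_rank_walk : StrictMono fun n => rank p (walk q p n) :=
  strictMono_nat_of_lt_succ fun n => by
    simp only [walk_succ]
    exact (H.valid_step_and_rank_lt (H.valid_walk n)).2

lemma walk_injective : Function.Injective (walk q p) :=
  fun _ _ h => H.strictMono_rank_walk.injective (congrArg (rank p) h)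

lemma step_eq_step_of_vert_eq {s s' : Pos} (hs : Valid q p s) (hs' : Valid q p s')
    (hlt : rank p s < rank p s') (he : vert q p s = vert q p s') : step q p s = step q p s' := by
  cases s with
  | fwd k i =>
    cases s' with
    | fwd k' i' =>
      obtain rfl := H.eq_of_mem_q hs.vert_mem_q (he ▸ hs'.vert_mem_q)
      rw [← hs.idxOf_vert_q, ← hs'.idxOf_vert_q, he]
    | bwd m j =>
      have hkm : k ≤ m := by
        rcases Prod.Lex.toLex_lt_toLex.1 hlt with h | h <;> dsimp only at h <;> omega
      have hnj : ¬ JumpsAt q m (vert q p (.bwd m j)) := fun ⟨j', hj', hv⟩ => by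
        have := H.eq_of_mem_q hs.vert_mem_q (he ▸ hv)
        omega
      rw [H.step_fwd_of_descendsAt hkm (he ▸ hs'.vert_mem_p)
        (by rw [he, hs'.idxOf_vert_p]; exact hs'.2), step_bwd_of_not_jumpsAt hnj, he,
        hs'.idxOf_vert_p]
  | bwd m j =>
    cases s' with
    | fwd k i =>
      have hmk : m < k := by
        rcases Prod.Lex.toLex_lt_toLex.1 hlt with h | h <;> dsimp only at h <;> omega
      have hnd : ¬ DescendsAt q p k (vert q p (.fwd k i)) := fun ⟨m', hkm', hv, _⟩ => by
        have := H.eq_of_mem_p hs.vert_mem_p (he ▸ hv)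
        omega
      rw [H.step_bwd_of_jumpsAt hmk (he ▸ hs'.vert_mem_q), step_fwd_of_not_descendsAt hnd, he,
        hs'.idxOf_vert_q]
    | bwd m' j' =>
      obtain rfl := H.eq_of_mem_p hs.vert_mem_p (he ▸ hs'.vert_mem_p)
      rw [← hs.idxOf_vert_p, ← hs'.idxOf_vert_p, he]

lemma ray_injective : Function.Injective (ray q p) := by
  have key : ∀ a b, a < b → ray q p a ≠ ray q p b := fun a b hab he => by
    have := H.step_eq_step_of_vert_eq (H.valid_walk a) (H.valid_walk b)
      (H.strictMono_rank_walk hab) he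
    rw [← walk_succ, ← walk_succ] at this
    have := H.walk_injective this
    omega
  intro a b he
  by_contra hne
  rcases Nat.lt_or_gt_of_ne hne with h | h
  exacts [key a b h he, key b a h he.symm]

lemma adj_step {s : Pos} (hs : Valid q p s) :
    if (step q p s).isFwd then D (vert q p s) (vert q p (step q p s))
    else D (vert q p (step q p s)) (vert q p s) := by
  have hs' := (H.valid_step_and_rank_lt hs).1
  cases s with
  | fwd k i =>
    rcases hstep : step q p (.fwd k i) with ⟨k', i'⟩ | ⟨m, j⟩ <;> rw [hstep] at hs' <;>
      simp only [Pos.isFwd, if_true, Bool.false_eq_true, if_false]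
    · obtain ⟨-, rfl, rfl⟩ := step_fwd_eq_fwd hstep
      exact (q _).adj_getD hs'.2 _ _
    · obtain ⟨hkm, hvp, -, rfl⟩ := step_fwd_eq_bwd hstep
      exact (p m).adj_pred hvp (H.idxOf_pos hkm hs.vert_mem_q hvp) _
  | bwd m i =>
    rcases hstep : step q p (.bwd m i) with ⟨k, l⟩ | ⟨m', i'⟩ <;> rw [hstep] at hs' <;>
      simp only [Pos.isFwd, if_true, Bool.false_eq_true, if_false]
    · obtain ⟨-, hvq, rfl⟩ := step_bwd_eq_fwd hstep
      exact (q k).adj_succ hvq hs'.2 _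
    · obtain ⟨hj, rfl, rfl⟩ := step_bwd_eq_bwd hstep
      have := (p m').adj_pred hs.vert_mem_p
        (by rw [hs.idxOf_vert_p]; exact H.pos_of_not_jumpsAt hj) (p m').first
      rwa [hs.idxOf_vert_p] at this

lemma ray_adj (n : ℕ) :
    if orient q p n then D (ray q p n) (ray q p (n + 1)) else D (ray q p (n + 1)) (ray q p n) := by
  simpa only [orient, ray, walk_succ] using H.adj_step (H.valid_walk n)

lemma exists_fwd_ge (n : ℕ) : ∃ n' ≥ n, (walk q p n').isFwd = true := by
  by_contra! hbwd
  obtain ⟨m, i, hn⟩ := Pos.isFwd_eq_false_iff.1 (by simpa using hbwd n le_rfl)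
  have hstay : ∀ t, walk q p (n + t) = .bwd m (i - t) ∧ t ≤ i := by
    intro t
    induction t with
    | zero => exact ⟨hn, Nat.zero_le i⟩
    | succ t ih =>
      obtain ⟨m', i', hnext⟩ :=
        Pos.isFwd_eq_false_iff.1 (by simpa using hbwd (n + t + 1) (by omega))
      rw [walk_succ, ih.1] at hnext
      obtain ⟨hj, rfl, rfl⟩ := step_bwd_eq_bwd hnext
      have := H.pos_of_not_jumpsAt hj
      rw [← add_assoc, walk_succ, ih.1, hnext, Nat.sub_sub]
      exact ⟨rfl, by omega⟩
  have := (hstay (i + 1)).2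
  omega

lemma exists_bwd_ge (n : ℕ) : ∃ n' ≥ n, (walk q p n').isFwd = false := by
  by_contra! hfwd
  obtain ⟨k, i, hn⟩ := Pos.isFwd_eq_true_iff.1 (by simpa using hfwd n le_rfl)
  have hstay : ∀ t, walk q p (n + t) = .fwd k (i + t) := by
    intro t
    induction t with
    | zero => exact hn
    | succ t ih =>
      obtain ⟨k', i', hnext⟩ :=
        Pos.isFwd_eq_true_iff.1 (by simpa using hfwd (n + t + 1) (by omega))
      rw [walk_succ, ih] at hnext
      obtain ⟨-, rfl, rfl⟩ := step_fwd_eq_fwd hnext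
      rw [← add_assoc, walk_succ, ih, hnext, add_assoc]
  have := (hstay ((q k).verts.length) ▸ H.valid_walk (n + (q k).verts.length)).2
  omega

lemma exists_switch_ge (N : ℕ) :
    ∃ k ≥ N, orient q p k = true ∧ orient q p (k + 1) = false := by
  refine exists_true_and_succ_false_ge (fun n => ?_) (fun n => ?_) N
  · obtain ⟨n', hn', h⟩ := H.exists_fwd_ge (n + 1)
    exact ⟨n' - 1, by omega, by rwa [orient, Nat.sub_add_cancel (by omega)]⟩
  · obtain ⟨n', hn', h⟩ := H.exists_bwd_ge (n + 1)
    exact ⟨n' - 1, by omega, by rwa [orient, Nat.sub_add_cancel (by omega)]⟩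

lemma entersAt_spec {t m : ℕ} (h : EntersAt q p t m) :
    ray q p t ∈ (p m).verts ∧ CleanAbove q p m ((p m).verts.idxOf (ray q p t)) ∧ 0 < m ∧
      0 < (p m).verts.idxOf (ray q p t) ∧
      walk q p (t + 1) = .bwd m ((p m).verts.idxOf (ray q p t) - 1) := by
  obtain ⟨k, i, j, ht, ht'⟩ := h
  have hs := ht ▸ H.valid_walk t
  rw [walk_succ, ht] at ht'
  obtain ⟨hkm, hv, hc, rfl⟩ := step_fwd_eq_bwd ht'
  rw [ray, ht, walk_succ, ht, ht']
  exact ⟨hv, hc, by have := hs.1; omega, H.idxOf_pos hkm hs.vert_mem_q hv, rfl⟩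

lemma entersAt_unique {t t' m : ℕ} (h : EntersAt q p t m) (h' : EntersAt q p t' m) : t = t' := by
  have key : ∀ {t t'}, EntersAt q p t m → EntersAt q p t' m → ¬ t < t' := by
    rintro t t' ⟨-, -, j, -, ht⟩ ⟨k', i', _, ht', hnext⟩ hlt
    rw [walk_succ, ht'] at hnext
    have hkm := (step_fwd_eq_bwd hnext).1
    have := H.strictMono_rank_walk.monotone (Nat.succ_le_of_lt hlt)
    simp only [ht, ht', rank, Prod.Lex.toLex_le_toLex] at this
    omega
  rcases Nat.lt_trichotomy t t' with hlt | heq | hgt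
  exacts [absurd hlt (key h h'), heq, absurd hgt (key h' h)]

lemma exists_entersAt_of_walk_eq_bwd {t m i : ℕ} (ht : walk q p t = .bwd m i) (hm : 0 < m) :
    ∃ t0 < t, EntersAt q p t0 m ∧ i < (p m).verts.idxOf (ray q p t0) := by
  induction t generalizing i with
  | zero =>
    simp only [walk, Function.iterate_zero, id, Pos.bwd.injEq] at ht
    omega
  | succ t ih =>
    rcases hprev : walk q p t with ⟨k, j⟩ | ⟨m', j⟩
    · have hent : EntersAt q p t m := ⟨k, j, i, hprev, ht⟩
      obtain ⟨-, -, -, hpos, hsucc⟩ := H.entersAt_spec hent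
      rw [ht, Pos.bwd.injEq] at hsucc
      exact ⟨t, by omega, hent, by omega⟩
    · rw [walk_succ, hprev] at ht
      obtain ⟨-, rfl, rfl⟩ := step_bwd_eq_bwd ht
      obtain ⟨t0, ht0, hent, hlt⟩ := ih hprev
      exact ⟨t0, by omega, hent, by omega⟩

lemma ray_eq_of_entersAt {t0 m t : ℕ} (h0 : EntersAt q p t0 m) (hmem : ray q p t ∈ (p m).verts)
    (hle : (p m).verts.idxOf (ray q p t0) ≤ (p m).verts.idxOf (ray q p t)) :
    ray q p t = ray q p t0 := by
  obtain ⟨hv0, hc0, hm, -, -⟩ := H.entersAt_spec h0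
  by_contra hne
  have hlt := lt_of_le_of_ne hle fun he => hne ((List.idxOf_inj hv0).1 he).symm
  have hs := H.valid_walk t
  have hv : ray q p t = vert q p (walk q p t) := rfl
  rcases hw : walk q p t with ⟨k, i⟩ | ⟨m', i⟩ <;> rw [hw] at hs hv
  · by_cases hkm : k ≤ m
    · have hent : EntersAt q p t m := ⟨k, i, _, hw, by
        rw [walk_succ, hw, H.step_fwd_of_descendsAt hkm (hv ▸ hmem) (hv ▸ hc0.mono hlt.le)]⟩
      exact hne (congrArg (ray q p) (H.entersAt_unique hent h0))
    · exact hc0 _ hmem hlt k (by omega) (hv ▸ hs.vert_mem_q)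
  · obtain rfl := H.eq_of_mem_p hmem (hv ▸ hs.vert_mem_p)
    obtain ⟨t1, -, h1, hi⟩ := H.exists_entersAt_of_walk_eq_bwd hw hm
    rw [H.entersAt_unique h1 h0] at hi
    have := hv ▸ hs.idxOf_vert_p
    omega

def teeth : Set (DiPath D) :=
  {r | ∃ k m, ∃ h : EntersAt q p (k + 1) m, r = (p m).suffix (H.entersAt_spec h).1}

lemma ray_zero_not_mem_teeth {r : DiPath D} (hr : r ∈ H.teeth) : ray q p 0 ∉ r.verts := by
  obtain ⟨k, m, h, rfl⟩ := hr
  intro hmem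
  have := H.eq_of_mem_p ((p m).mem_of_mem_suffix _ hmem) (ray_zero (q := q) ▸ (p 0).last_mem)
  exact (H.entersAt_spec h).2.2.1.ne' this

lemma teeth_eq_of_mem {r s : DiPath D} (hr : r ∈ H.teeth) (hs : s ∈ H.teeth) {v : V}
    (hvr : v ∈ r.verts) (hvs : v ∈ s.verts) : r = s := by
  obtain ⟨k, m, h, rfl⟩ := hr
  obtain ⟨k', m', h', rfl⟩ := hs
  obtain rfl := H.eq_of_mem_p ((p m).mem_of_mem_suffix _ hvr) ((p m').mem_of_mem_suffix _ hvs)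
  obtain rfl : k = k' := by have := H.entersAt_unique h h'; omega
  rfl

lemma isLinkage_comb : IsLinkage D B0 (insert (DiPath.single D (ray q p 0)) H.teeth) := by
  refine ⟨?_, ?_⟩
  · rintro r (rfl | ⟨k, m, h, rfl⟩)
    · rw [DiPath.single_last, ray_zero, H.last_eq]
      exact H.last_mem 0
    · rw [DiPath.suffix_last, H.last_eq]
      exact H.last_mem m
  · rintro r (rfl | hr) s (rfl | hs) hne <;> rw [Set.disjoint_left]
    · exact absurd rfl hne
    · rintro v hv
      rw [DiPath.vertSet, Set.mem_ofPred_eq, DiPath.single_verts, List.mem_singleton] at hv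
      exact hv ▸ H.ray_zero_not_mem_teeth hs
    · rintro v hvr hv
      rw [DiPath.vertSet, Set.mem_ofPred_eq, DiPath.single_verts, List.mem_singleton] at hv
      exact H.ray_zero_not_mem_teeth hr (hv ▸ hvr)
    · exact fun v hvr hvs => hne (H.teeth_eq_of_mem hr hs hvr hvs)

lemma Ini_comb : Ini (insert (DiPath.single D (ray q p 0)) H.teeth) =
    insert (ray q p 0) {v | ∃ k, orient q p k = true ∧ orient q p (k + 1) = false ∧
      v = ray q p (k + 1)} := by
  rw [Ini_eq_image, Set.image_insert_eq, DiPath.single_first]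
  congr 1
  ext v
  constructor
  · rintro ⟨_, ⟨k, m, h, rfl⟩, rfl⟩
    exact ⟨k, orient_switch_iff.2 ⟨m, h⟩ |>.1, orient_switch_iff.2 ⟨m, h⟩ |>.2,
      DiPath.suffix_first _ _⟩
  · rintro ⟨k, ho, ho', rfl⟩
    obtain ⟨m, h⟩ := orient_switch_iff.1 ⟨ho, ho'⟩
    exact ⟨_, ⟨k, m, h, rfl⟩, DiPath.suffix_first _ _⟩

lemma eq_first_of_mem_comb {r : DiPath D} (hr : r ∈ insert (DiPath.single D (ray q p 0)) H.teeth)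
    {v : V} (hv : v ∈ r.verts) (hray : v ∈ Set.range (ray q p)) : v = r.first := by
  rcases hr with rfl | ⟨k, m, h, rfl⟩
  · simpa using hv
  · obtain ⟨t, rfl⟩ := hray
    rw [DiPath.suffix_first]
    exact H.ray_eq_of_entersAt h ((p m).mem_of_mem_suffix _ hv)
      ((p m).idxOf_le_of_mem_suffix _ hv)

theorem containsAltComb : ContainsAltComb D B0 :=
  ⟨ray q p, orient q p, _, H.ray_injective, H.ray_adj, H.exists_switch_ge, H.isLinkage_comb,
    H.Ini_comb, fun _ hr _ hv hray => H.eq_first_of_mem_comb hr hv hray⟩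

end IsLadder

end Ladder

theorem LinkableOnto.maximalIn {D : V → V → Prop} {B0 : Set V} (hAC : ¬ ContainsAltComb D B0)
    {B : Set V} (h : LinkableOnto D B0 B) : MaximalIn (Linkable D B0) B := by
  classical
  obtain ⟨P, hP, rfl, hTer⟩ := h
  refine ⟨⟨P, hP, rfl⟩, fun J ⟨Q, hQ, hJ⟩ hsub => hsub.antisymm' fun v hv => ?_⟩
  subst hJ
  by_contra hvP
  obtain ⟨q, p, H⟩ := Ladder.exists_isLadder hP hTer hQ hsub ⟨hv, hvP⟩
  exact hAC H.containsAltComb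

/-- In a dimaze without alternating combs, maximal linkable sets are exactly
the sets linkable onto the exits. -/
theorem noAC_base_criterion (D : V → V → Prop) (B0 : Set V)
    (hD : IsDimaze D B0) (hAC : ¬ ContainsAltComb D B0) (B : Set V) :
    MaximalIn (Linkable D B0) B ↔ LinkableOnto D B0 B :=
  ⟨MaximalIn.linkableOnto hD, LinkableOnto.maximalIn hAC⟩
end

section
/- Let D be the digraph of a complete bipartite graph between an uncountable set X and a countably infinite set B_0, with all edges directed from X towards B_0. Then a subset I of X is linkable to B_0 if and only if I is countable; hence M_L(D, B_0) does not satisfy the maximality axiom (IM) and is not a matroid. -/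
open Set

universe u

variable {V : Type*}

/-- The complete bipartite digraph from `X` to `B`, all edges directed towards `B`. -/
def completeBipAdj (X B : Type*) : X ⊕ B → X ⊕ B → Prop :=
  fun a b => ∃ x y, a = Sum.inl x ∧ b = Sum.inr y

/-!
A linkage is injective on its terminal vertices, so a linkable set is no larger than the set of
exits; conversely, in the complete bipartite digraph every countable subset of `X` is matched
into the countably infinite `B`. Hence the linkable subsets of `X` are exactly the countable
ones, and since `X` is uncountable, no linkable subset of `X` is maximal among those.
-/

open Function

variable {D : V → V → Prop} {B0 : Set V}

namespace DiPath

def ofAdj {a b : V} (hab : D a b) (hne : a ≠ b) : DiPath D where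
  verts := [a, b]
  ne := List.cons_ne_nil _ _
  nodup := by simpa using hne
  chain := List.isChain_pair.mpr hab

lemma vertSet_ofAdj {a b : V} (hab : D a b) (hne : a ≠ b) :
    (ofAdj hab hne).vertSet = {a, b} := by
  ext v; simp [ofAdj, vertSet]

lemma first_mem_vertSet (p : DiPath D) : p.first ∈ p.vertSet := List.head_mem p.ne

lemma last_mem_vertSet (p : DiPath D) : p.last ∈ p.vertSet := List.getLast_mem p.ne

end DiPath

lemma linkable_empty (D : V → V → Prop) (B0 : Set V) : Linkable D B0 ∅ :=
  ⟨∅, ⟨by simp, by simp⟩, by simp [Ini]⟩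

lemma IsLinkage.injOn_last {P : Set (DiPath D)} (hP : IsLinkage D B0 P) :
    InjOn DiPath.last P := by
  intro p hp q hq hpq
  by_contra hne
  exact (hP.2 p hp q hq hne).ne_of_mem p.last_mem_vertSet q.last_mem_vertSet hpq

lemma IsLinkage.countable {P : Set (DiPath D)} (hB0 : B0.Countable) (hP : IsLinkage D B0 P) :
    P.Countable :=
  MapsTo.countable_of_injOn hP.1 hP.injOn_last hB0

lemma Linkable.countable {I : Set V} (hB0 : B0.Countable) (hI : Linkable D B0 I) :
    I.Countable := by
  obtain ⟨P, hP, rfl⟩ := hI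
  exact (hP.countable hB0).image DiPath.first

lemma linkable_range_of_matching {ι : Type*} {u w : ι → V} (hu : Injective u)
    (hw : Injective w) (huB0 : ∀ i, u i ∉ B0) (hwB0 : ∀ i, w i ∈ B0) (hD : ∀ i, D (u i) (w i)) :
    Linkable D B0 (range u) := by
  have hne : ∀ i j, u i ≠ w j := fun i j h => huB0 i (h ▸ hwB0 j)
  refine ⟨range fun i => DiPath.ofAdj (hD i) (hne i i), ⟨?_, ?_⟩, ?_⟩
  · rintro _ ⟨i, rfl⟩
    exact hwB0 i
  · rintro _ ⟨i, rfl⟩ _ ⟨j, rfl⟩ hpq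
    have hij : i ≠ j := fun h => hpq (h ▸ rfl)
    simp only [DiPath.vertSet_ofAdj, disjoint_insert_left, disjoint_insert_right,
      disjoint_singleton, mem_insert_iff, mem_singleton_iff, not_or]
    exact ⟨⟨(hu.ne hij).symm, hne j i⟩, hne i j, hw.ne hij⟩
  · ext v
    simp [Ini, DiPath.ofAdj, DiPath.first]

section CompleteBipartite

variable {X B : Type*}

lemma linkable_inl_image_of_injective {I : Set X} {e : I → B} (he : Injective e) :
    Linkable (completeBipAdj X B) (range Sum.inr) (Sum.inl '' I) := by
  rw [image_eq_range]
  exact linkable_range_of_matching (Sum.inl_injective.comp Subtype.val_injective)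
    (Sum.inr_injective.comp he) (fun _ ⟨_, h⟩ => Sum.inr_ne_inl h) (fun _ => mem_range_self _)
    (fun i => ⟨i, e i, rfl, rfl⟩)

lemma linkable_inl_image_iff [Countable B] [Infinite B] (I : Set X) :
    Linkable (completeBipAdj X B) (range Sum.inr) (Sum.inl '' I) ↔ I.Countable := by
  refine ⟨fun h => ?_, fun hI => ?_⟩
  · exact countable_of_injective_of_countable_image Sum.inl_injective.injOn
      (h.countable (countable_range _))
  · obtain ⟨g, hg⟩ := Set.countable_iff_exists_injective.mp hI
    exact linkable_inl_image_of_injective ((Infinite.natEmbedding B).injective.comp hg)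

end CompleteBipartite

lemma not_satisfiesIM_of_forall_exists_insert {α : Type*} {Ind : Set α → Prop} (h0 : Ind ∅)
    (S : Set α) (hS : ∀ J ⊆ S, Ind J → ∃ x ∈ S, x ∉ J ∧ Ind (insert x J)) :
    ¬ SatisfiesIM Ind := by
  intro hIM
  obtain ⟨J, hJ, -, hJS, hmax⟩ := hIM ∅ S h0 (empty_subset S)
  obtain ⟨x, hxS, hxJ, hins⟩ := hS J hJS hJ
  exact hxJ (hmax _ hins (insert_subset hxS hJS) (subset_insert x J) ▸ mem_insert x J)

/-- For the complete bipartite digraph from an uncountable set `X` to a countably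
infinite set `B0` (all edges towards `B0`), a subset of `X` is linkable iff it is
countable; hence the linkability system fails (IM) and is not a matroid. -/
theorem completeBipartite_not_matroid (X B : Type*) (hX : ¬ Countable X)
    (hB1 : Countable B) (hB2 : Infinite B) :
    (∀ I : Set X,
      Linkable (completeBipAdj X B) (Set.range Sum.inr) (Sum.inl '' I) ↔ I.Countable) ∧
    ¬ SatisfiesIM (Linkable (completeBipAdj X B) (Set.range Sum.inr)) ∧
    ¬ IsMatroidIndep (Linkable (completeBipAdj X B) (Set.range Sum.inr)) := by
  have hIM : ¬ SatisfiesIM (Linkable (completeBipAdj X B) (range Sum.inr)) := by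
    refine not_satisfiesIM_of_forall_exists_insert (linkable_empty _ _) (range Sum.inl) ?_
    intro J hJS hJ
    obtain ⟨I, rfl⟩ := subset_range_iff_exists_image_eq.mp hJS
    have hI : I.Countable := (linkable_inl_image_iff I).mp hJ
    obtain ⟨x, hx⟩ : Iᶜ.Nonempty :=
      nonempty_compl.mpr fun h => hX (countable_univ_iff.mp (h ▸ hI))
    refine ⟨Sum.inl x, mem_range_self x, fun h => hx (Sum.inl_injective.mem_set_image.mp h), ?_⟩
    rw [← image_insert_eq]
    exact (linkable_inl_image_iff _).mpr (hI.insert x)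
  exact ⟨linkable_inl_image_iff, hIM, fun h => hIM h.2.2.2⟩
end
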